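/- Let A be a unital C*-algebra and let S, T be unitary elements of A with ST = TS. Let f, g, h : ℂ → ℂ be the continuous functions which on the unit circle are given by f(e^{2πit}) = sin²(πt), g(e^{2πit}) = sin(πt)·c₀(t), h(e^{2πit}) = sin(πt)·c₁(t) for t ∈ [0,1], where c₀(t) = |cos(πt)| for t ∈ [0,1/2] and c₀(t) = 0 otherwise, and c₁(t) = |cos(πt)| for t ∈ (1/2,1] and c₁(t) = 0 otherwise; equivalently, on the unit circle f(z) = (1 − Re z)/2, g(z) = max(Im z, 0)/2 and h(z) = max(−Im z, 0)/2. Then the 2×2 matrix P(S,T) = [[f(S), g(S) + h(S)T], [h(S)T* + g(S), 1 − f(S)]] over A is a projection, i.e. P(S,T)* = P(S,T) and P(S,T)² = P(S,T). -/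

import Mathlib

/-!
Write `a = f(S)` and `w = g(S) + h(S) T`, so that `P = [[a, w], [w*, 1 - a]]`. Such a matrix is a
projection as soon as `a` is self-adjoint, commutes with `w`, and `w w* = w* w = a - a²`. Since `T`
commutes with every `k(S)` and `T T* = T* T = 1`, both `w w*` and `w* w` reduce to
`g(S)² + h(S)²` once `g(S) h(S) = 0` is used. On the unit circle `g h = 0` and
`g² + h² = (Im z)² / 4 = (1 - Re z)(1 + Re z) / 4 = f - f²`, which transfers to `S` because its
spectrum lies on the circle.
-/

section StarRing

variable {R : Type*} [Ring R] [StarRing R] {a b c u w : R}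

theorem Matrix.isStarProjection_of_mul_star_eq (ha : IsSelfAdjoint a) (haw : Commute a w)
    (hww : w * star w = a - a * a) (hw'w : star w * w = a - a * a) :
    IsStarProjection !![a, w; star w, 1 - a] where
  isSelfAdjoint := by
    ext i j
    fin_cases i <;> fin_cases j <;> simp [Matrix.star_apply, ha.star_eq]
  isIdempotentElem := by
    have hw'a : Commute (star w) a := by
      simpa [ha.star_eq] using haw.star_star.symm
    rw [IsIdempotentElem, Matrix.mul_fin_two, hww, hw'w, haw.eq, hw'a.eq]
    noncomm_ring

lemma IsSelfAdjoint.mul_eq_zero_comm (hb : IsSelfAdjoint b) (hc : IsSelfAdjoint c)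
    (hbc : b * c = 0) : c * b = 0 := by
  simpa [hb.star_eq, hc.star_eq] using congrArg star hbc

lemma star_add_mul_eq (hb : IsSelfAdjoint b) (hc : IsSelfAdjoint c) (huc : Commute u c) :
    star (b + c * u) = c * star u + b := by
  have hu'c : Commute (star u) c := hc.star_eq ▸ huc.star_star
  rw [star_add, star_mul, hb.star_eq, hc.star_eq, add_comm, hu'c.eq]

lemma add_mul_mul_star_add_mul (hb : IsSelfAdjoint b) (hc : IsSelfAdjoint c) (hbc : b * c = 0)
    (hu : u ∈ unitary R) (hub : Commute u b) (huc : Commute u c) :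
    (b + c * u) * star (b + c * u) = b * b + c * c := by
  rw [star_add_mul_eq hb hc huc]
  calc (b + c * u) * (c * star u + b)
      = b * b + b * c * star u + c * (u * c) * star u + c * (u * b) := by noncomm_ring
    _ = b * b + b * c * star u + c * c * (u * star u) + c * b * u := by
        rw [huc.eq, hub.eq]; noncomm_ring
    _ = b * b + c * c := by
        rw [hbc, hb.mul_eq_zero_comm hc hbc, Unitary.mul_star_self_of_mem hu]; noncomm_ring

lemma star_add_mul_mul_add_mul (hb : IsSelfAdjoint b) (hc : IsSelfAdjoint c) (hbc : b * c = 0)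
    (hu : u ∈ unitary R) (hub : Commute u b) (huc : Commute u c) :
    star (b + c * u) * (b + c * u) = b * b + c * c := by
  have hu'b : Commute (star u) b := hb.star_eq ▸ hub.star_star
  have hcu : star u * c * u = c := (commute_unitary_iff_star_left_conjugate hu).1 huc
  rw [star_add_mul_eq hb hc huc]
  calc (c * star u + b) * (b + c * u)
      = b * b + b * c * u + c * (star u * b) + c * (star u * c * u) := by noncomm_ring
    _ = b * b + b * c * u + c * b * star u + c * c := by rw [hu'b.eq, hcu]; noncomm_ring
    _ = b * b + c * c := by rw [hbc, hb.mul_eq_zero_comm hc hbc]; noncomm_ring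

theorem Matrix.isStarProjection_of_unitary (ha : IsSelfAdjoint a) (hb : IsSelfAdjoint b)
    (hc : IsSelfAdjoint c) (hab : Commute a b) (hac : Commute a c) (hbc : b * c = 0)
    (hsq : b * b + c * c = a - a * a) (hu : u ∈ unitary R) (hua : Commute u a)
    (hub : Commute u b) (huc : Commute u c) :
    IsStarProjection !![a, b + c * u; c * star u + b, 1 - a] := by
  rw [← star_add_mul_eq hb hc huc]
  refine isStarProjection_of_mul_star_eq ha (hab.add_right (hac.mul_right hua.symm)) ?_ ?_
  · rw [add_mul_mul_star_add_mul hb hc hbc hu hub huc, hsq]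
  · rw [star_add_mul_mul_add_mul hb hc hbc hu hub huc, hsq]

end StarRing

lemma Commute.star_left_of_mem_unitary {R : Type*} [Monoid R] [StarMul R] {u x : R}
    (hu : u ∈ unitary R) (hux : Commute u x) : Commute (star u) x :=
  Commute.units_inv_left (u := Unitary.toUnits ⟨u, hu⟩) hux

lemma isSelfAdjoint_cfc_of_star_eq {A : Type*} [CStarAlgebra A] {a : A} {k : ℂ → ℂ}
    (hk : ∀ z ∈ spectrum ℂ a, star (k z) = k z) :
    IsSelfAdjoint (cfc k a) := by
  rw [isSelfAdjoint_iff, ← cfc_star]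
  exact cfc_congr hk

lemma max_mul_max_neg_eq_zero (x : ℝ) : max x 0 * max (-x) 0 = 0 := by
  rcases le_total x 0 with hx | hx <;> simp [hx]

lemma max_mul_self_add_max_neg_mul_self (x : ℝ) :
    max x 0 * max x 0 + max (-x) 0 * max (-x) 0 = x * x := by
  rcases le_total x 0 with hx | hx <;> simp [hx]

lemma Complex.max_im_half_sq_add_max_neg_im_half_sq {z : ℂ} (hz : ‖z‖ = 1) :
    max z.im 0 / 2 * (max z.im 0 / 2) + max (-z.im) 0 / 2 * (max (-z.im) 0 / 2)
      = (1 - z.re) / 2 - (1 - z.re) / 2 * ((1 - z.re) / 2) := by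
  have hnorm : z.re * z.re + z.im * z.im = 1 := by
    rw [← normSq_apply, normSq_eq_norm_sq, hz, one_pow]
  linear_combination max_mul_self_add_max_neg_mul_self z.im / 4 + hnorm / 4

theorem stmt_0 {A : Type*} [CStarAlgebra A] (S T : A)
    (hS : S ∈ unitary A) (hT : T ∈ unitary A) (hST : S * T = T * S)
    (f g h : ℂ → ℂ)
    (hfc : Continuous f) (hgc : Continuous g) (hhc : Continuous h)
    (hf : ∀ z : ℂ, ‖z‖ = 1 → f z = (((1 - z.re) / 2 : ℝ) : ℂ))
    (hg : ∀ z : ℂ, ‖z‖ = 1 → g z = ((max z.im 0 / 2 : ℝ) : ℂ))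
    (hh : ∀ z : ℂ, ‖z‖ = 1 → h z = ((max (-z.im) 0 / 2 : ℝ) : ℂ))
    (P : Matrix (Fin 2) (Fin 2) A)
    (hP : P = !![cfc f S, cfc g S + cfc h S * T;
                 cfc h S * star T + cfc g S, 1 - cfc f S]) :
    star P = P ∧ P * P = P := by
  have hsp (z : ℂ) (hz : z ∈ spectrum ℂ S) : ‖z‖ = 1 := spectrum.norm_eq_one_of_unitary hS hz
  have hTS (k : ℂ → ℂ) : Commute T (cfc k S) :=
    (Commute.cfc hST (Commute.star_left_of_mem_unitary hS hST) k).symm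
  have hgh : cfc g S * cfc h S = 0 := by
    rw [← cfc_mul g h S, ← cfc_zero ℂ S]
    refine cfc_congr fun z hz => ?_
    rw [hg z (hsp z hz), hh z (hsp z hz), ← Complex.ofReal_mul, div_mul_div_comm,
      max_mul_max_neg_eq_zero]
    simp
  have hsq : cfc g S * cfc g S + cfc h S * cfc h S = cfc f S - cfc f S * cfc f S := by
    rw [← cfc_mul g g S, ← cfc_mul h h S, ← cfc_mul f f S, ← cfc_add .., ← cfc_sub ..]
    refine cfc_congr fun z hz => ?_
    rw [hf z (hsp z hz), hg z (hsp z hz), hh z (hsp z hz)]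
    exact_mod_cast
      congrArg ((↑) : ℝ → ℂ) (Complex.max_im_half_sq_add_max_neg_im_half_sq (hsp z hz))
  have hsa (k : ℂ → ℂ) (r : ℂ → ℝ) (hk : ∀ z : ℂ, ‖z‖ = 1 → k z = r z) :
      IsSelfAdjoint (cfc k S) :=
    isSelfAdjoint_cfc_of_star_eq fun z hz => by
      rw [hk z (hsp z hz), Complex.star_def, Complex.conj_ofReal]
  have hproj := Matrix.isStarProjection_of_unitary (hsa f _ hf) (hsa g _ hg) (hsa h _ hh)
    (cfc_commute_cfc f g S) (cfc_commute_cfc f h S) hgh hsq hT (hTS f) (hTS g) (hTS h)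
  subst hP
  exact ⟨hproj.isSelfAdjoint, hproj.isIdempotentElem⟩
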